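/- arXiv:0908.1458 — 4 statements merged into one kernel-verified Lean document; each statement's English description precedes it below -/
import Mathlib

section
/- The sequence a_n = Σ_{k=0}^n C(n,k)^2 C(n+k,k)^2 satisfies the Apery recurrence n^3 u_n - (34n^3 - 51n^2 + 27n - 5) u_{n-1} + (n-1)^3 u_{n-2} = 0 for all n ≥ 2. -/
/-!
Zeilberger's creative telescoping. Writing `F n k = C(n,k)^2 C(n+k,k)^2` and
`G n k = 4 (2n+1) (k(2k+1) - (2n+1)^2) F n k`, one has, for `n ≥ 2`,
`n^3 F n k - (34n^3 - 51n^2 + 27n - 5) F (n-1) k + (n-1)^3 F (n-2) k = G (n-1) k - G (n-1) (k-1)`.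
Both sides are rational multiples of `F n k`, so this is an identity of rational functions
in `n` and `k`; summing over `k` telescopes to `0`.
-/

/-- The Apery sequence `a n = ∑ k, C(n,k)^2 C(n+k,k)^2`. -/
def aperyA (n : ℕ) : ℚ :=
  ∑ k ∈ Finset.range (n + 1), ((n.choose k : ℚ))^2 * (((n + k).choose k : ℚ))^2

open Finset

namespace Nat

theorem cast_choose_mul_add_one {R : Type*} [Ring R] (n k : ℕ) :
    (n.choose k : R) * (n + 1) = (n + 1).choose k * (n + 1 - k) := by
  rcases le_or_gt k (n + 1) with hk | hk
  · have h := congrArg (Nat.cast : ℕ → R) (choose_mul_succ_eq n k)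
    push_cast [hk] at h
    exact h
  · simp [choose_eq_zero_of_lt hk, choose_eq_zero_of_lt (show n < k by omega)]

theorem cast_add_one_mul_choose {R : Type*} [Ring R] (n k : ℕ) :
    (n + 1 : R) * n.choose k = (n + 1).choose (k + 1) * (k + 1) := by
  simpa using congrArg (Nat.cast : ℕ → R) (add_one_mul_choose_eq n k)

end Nat

def aperyTerm (n k : ℕ) : ℚ := n.choose k * (n + k).choose k

theorem aperyTerm_zero_right (n : ℕ) : aperyTerm n 0 = 1 := by
  simp [aperyTerm]

theorem aperyTerm_of_lt {n k : ℕ} (h : n < k) : aperyTerm n k = 0 := by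
  simp [aperyTerm, Nat.choose_eq_zero_of_lt h]

theorem add_add_one_mul_aperyTerm (n k : ℕ) :
    (n + k + 1 : ℚ) * aperyTerm n k = (n + 1 - k) * aperyTerm (n + 1) k := by
  have h₁ := Nat.cast_choose_mul_add_one (R := ℚ) n k
  have h₂ := Nat.cast_choose_mul_add_one (R := ℚ) (n + k) k
  push_cast at h₂
  unfold aperyTerm
  rw [show n + 1 + k = n + k + 1 by omega]
  linear_combination (n.choose k : ℚ) * h₂ + ((n + k + 1).choose k : ℚ) * h₁

theorem sq_mul_aperyTerm_add_one_add_one (n k : ℕ) :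
    (k + 1 : ℚ) ^ 2 * aperyTerm (n + 1) (k + 1)
      = (n + k + 1) * (n + k + 2) * aperyTerm n k := by
  have h₁ := Nat.cast_add_one_mul_choose (R := ℚ) n k
  have h₂ := Nat.cast_add_one_mul_choose (R := ℚ) (n + k + 1) k
  have h₃ := Nat.cast_choose_mul_add_one (R := ℚ) (n + k) k
  unfold aperyTerm
  rw [show n + 1 + (k + 1) = n + k + 1 + 1 by omega]
  push_cast at h₂ h₃ ⊢
  linear_combination -(k + 1) * ((n + k + 1 + 1).choose (k + 1) : ℚ) * h₁
    - (n + 1) * (n.choose k : ℚ) * h₂ - (n + k + 2) * (n.choose k : ℚ) * h₃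

/-- Zeilberger's certificate, shifted by one in `k` so that it vanishes at `k = 0`. -/
def aperyCertificate (n : ℕ) : ℕ → ℚ
  | 0 => 0
  | k + 1 => 4 * (2 * n + 1) * (k * (2 * k + 1) - (2 * n + 1) ^ 2) * aperyTerm n k ^ 2

theorem aperyTerm_recurrence_eq_certificate_sub (m k : ℕ) :
    ((m : ℚ) + 2) ^ 3 * aperyTerm (m + 2) k ^ 2
      - (34 * ((m : ℚ) + 2) ^ 3 - 51 * ((m : ℚ) + 2) ^ 2 + 27 * ((m : ℚ) + 2) - 5)
        * aperyTerm (m + 1) k ^ 2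
      + ((m : ℚ) + 1) ^ 3 * aperyTerm m k ^ 2
    = aperyCertificate (m + 1) (k + 1) - aperyCertificate (m + 1) k := by
  cases k with
  | zero =>
    simp only [aperyCertificate, aperyTerm_zero_right]
    push_cast
    ring
  | succ j =>
    set P := aperyTerm (m + 2) (j + 1)
    have hm₃ : (m + j + 3 : ℚ) ≠ 0 := by positivity
    have hm₂ : (m + j + 2 : ℚ) ≠ 0 := by positivity
    have h₁ : aperyTerm (m + 1) (j + 1) = (m + 1 - j) * P / (m + j + 3) := by
      rw [eq_div_iff hm₃]
      have := add_add_one_mul_aperyTerm (m + 1) (j + 1)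
      push_cast at this
      linear_combination this
    have h₀ : aperyTerm m (j + 1) = (m - j) * aperyTerm (m + 1) (j + 1) / (m + j + 2) := by
      rw [eq_div_iff hm₂]
      have := add_add_one_mul_aperyTerm m (j + 1)
      push_cast at this
      linear_combination this
    have hE : aperyTerm (m + 1) j = (j + 1) ^ 2 * P / ((m + j + 2) * (m + j + 3)) := by
      rw [eq_div_iff (mul_ne_zero hm₂ hm₃)]
      have := sq_mul_aperyTerm_add_one_add_one (m + 1) j
      push_cast at this
      linear_combination -this
    simp only [aperyCertificate]
    rw [h₀, h₁, hE]
    push_cast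
    field_simp
    ring

theorem aperyA_eq_sum_range {n N : ℕ} (h : n < N) :
    aperyA n = ∑ k ∈ range N, aperyTerm n k ^ 2 := by
  simp only [aperyA, aperyTerm, mul_pow]
  refine sum_subset (range_subset_range.2 h) fun k _ hk => ?_
  simp [Nat.choose_eq_zero_of_lt (show n < k by simpa using hk)]

theorem aperyA_recurrence (m : ℕ) :
    ((m : ℚ) + 2) ^ 3 * aperyA (m + 2)
      - (34 * ((m : ℚ) + 2) ^ 3 - 51 * ((m : ℚ) + 2) ^ 2 + 27 * ((m : ℚ) + 2) - 5)
        * aperyA (m + 1)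
      + ((m : ℚ) + 1) ^ 3 * aperyA m = 0 := by
  rw [aperyA_eq_sum_range (N := m + 3) (by omega), aperyA_eq_sum_range (N := m + 3) (by omega),
    aperyA_eq_sum_range (N := m + 3) (by omega), mul_sum, mul_sum, mul_sum,
    ← sum_sub_distrib, ← sum_add_distrib,
    sum_congr rfl fun k _ => aperyTerm_recurrence_eq_certificate_sub m k, sum_range_sub]
  simp [aperyCertificate, aperyTerm_of_lt (show m + 1 < m + 2 by omega)]

/-- The sequence `a_n = Σ_{k=0}^n C(n,k)^2 C(n+k,k)^2` satisfies Apery's recurrence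
`n^3 u_n - (34n^3 - 51n^2 + 27n - 5) u_{n-1} + (n-1)^3 u_{n-2} = 0` for all `n ≥ 2`. -/
theorem apery_a_recurrence :
    ∀ n : ℕ, 2 ≤ n →
      (n : ℚ)^3 * aperyA n
        - (34 * (n : ℚ)^3 - 51 * (n : ℚ)^2 + 27 * (n : ℚ) - 5) * aperyA (n - 1)
        + ((n : ℚ) - 1)^3 * aperyA (n - 2) = 0 := by
  intro n hn
  obtain ⟨m, rfl⟩ := Nat.exists_eq_add_of_le' hn
  rw [show m + 2 - 1 = m + 1 by omega, Nat.add_sub_cancel]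
  push_cast
  linear_combination aperyA_recurrence m
end

section
/- Let a_n be the solution of Apery's recurrence n^3 u_n - (34n^3-51n^2+27n-5) u_{n-1} + (n-1)^3 u_{n-2} = 0 with a_0 = 1, a_1 = 5. Then all a_n are positive integers. -/
open Finset

/-- The Apéry summand. -/
def apTerm (n k : ℕ) : ℕ := (n.choose k)^2 * ((n+k).choose k)^2

/-- The Apéry numbers. -/
def apSum (n : ℕ) : ℕ := ∑ k ∈ Finset.range (n+1), apTerm n k

/-- Zeilberger certificate. -/
noncomputable def Bq (n k : ℕ) : ℚ :=
  4*(2*(n:ℚ)+1)*((k:ℚ)*(2*(k:ℚ)+1)-(2*(n:ℚ)+1)^2) * (apTerm n k : ℚ)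

noncomputable def gB (n : ℕ) : ℕ → ℚ
  | 0 => 0
  | (k+1) => Bq n k

lemma apTerm_cast (n k : ℕ) :
    ((apTerm n k : ℕ) : ℚ) = ((n.choose k : ℚ))^2 * (((n+k).choose k : ℚ))^2 := by
  push_cast [apTerm]
  ring

lemma key (m k : ℕ) (hk : k ≤ m + 2) :
    ((m:ℚ)+2)^3 * (apTerm (m+2) k : ℚ)
      - (34*((m:ℚ)+1)^3+51*((m:ℚ)+1)^2+27*((m:ℚ)+1)+5) * (apTerm (m+1) k : ℚ)
      + ((m:ℚ)+1)^3 * (apTerm m k : ℚ) = gB (m+1) (k+1) - gB (m+1) k := by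
  rcases k with _ | j
  · simp only [apTerm, gB, Bq, Nat.choose_zero_right, apTerm]
    push_cast
    ring
  · rcases Nat.lt_or_ge j (m+1) with hj | hj
    · -- main case : 1 ≤ k ≤ m+1
      obtain ⟨d, rfl⟩ : ∃ d, m = j + d := ⟨m - j, by omega⟩
      have R1 : (j+d+1).choose (j+1) * (j+d+2) = (j+d+2).choose (j+1) * (d+1) := by
        simpa [show j+d+2-(j+1) = d+1 from by omega] using
          Nat.choose_mul_succ_eq (j+d+1) (j+1)
      have R2 : (j+d).choose (j+1) * (j+d+1) = (j+d+1).choose (j+1) * d := by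
        simpa [show j+d+1-(j+1) = d from by omega] using
          Nat.choose_mul_succ_eq (j+d) (j+1)
      have R3 : (2*j+d+2).choose (j+1) * (2*j+d+3) = (2*j+d+3).choose (j+1) * (j+d+2) := by
        simpa [show 2*j+d+3-(j+1) = j+d+2 from by omega] using
          Nat.choose_mul_succ_eq (2*j+d+2) (j+1)
      have R4 : (2*j+d+1).choose (j+1) * (2*j+d+2) = (2*j+d+2).choose (j+1) * (j+d+1) := by
        simpa [show 2*j+d+2-(j+1) = j+d+1 from by omega] using
          Nat.choose_mul_succ_eq (2*j+d+1) (j+1)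
      have R5 : (j+d+1).choose (j+1) * (j+1) = (j+d+1).choose j * (d+1) := by
        simpa [show j+d+1-j = d+1 from by omega] using
          Nat.choose_succ_right_eq (j+d+1) j
      have R6 : (2*j+d+2) * (2*j+d+1).choose j = (2*j+d+2).choose (j+1) * (j+1) := by
        simpa using Nat.add_one_mul_choose_eq (2*j+d+1) j
      have hd1 : ((d:ℚ)+1) ≠ 0 := by positivity
      have hn1 : ((j:ℚ)+d+1) ≠ 0 := by positivity
      have hn2 : ((j:ℚ)+d+2) ≠ 0 := by positivity
      have hn3 : (2*(j:ℚ)+d+2) ≠ 0 := by positivity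
      have eX : ((j+d+2).choose (j+1) : ℚ)
          = ((j+d+1).choose (j+1) : ℚ) * ((j:ℚ)+d+2)/((d:ℚ)+1) := by
        rw [eq_div_iff hd1]; exact_mod_cast R1.symm
      have eZ : ((j+d).choose (j+1) : ℚ)
          = ((j+d+1).choose (j+1) : ℚ) * (d:ℚ)/((j:ℚ)+d+1) := by
        rw [eq_div_iff hn1]; exact_mod_cast R2
      have eY : ((2*j+d+3).choose (j+1) : ℚ)
          = ((2*j+d+2).choose (j+1) : ℚ) * (2*(j:ℚ)+d+3)/((j:ℚ)+d+2) := by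
        rw [eq_div_iff hn2]; exact_mod_cast R3.symm
      have eW : ((2*j+d+1).choose (j+1) : ℚ)
          = ((2*j+d+2).choose (j+1) : ℚ) * ((j:ℚ)+d+1)/(2*(j:ℚ)+d+2) := by
        rw [eq_div_iff hn3]; exact_mod_cast R4
      have eu : ((j+d+1).choose j : ℚ)
          = ((j+d+1).choose (j+1) : ℚ) * ((j:ℚ)+1)/((d:ℚ)+1) := by
        rw [eq_div_iff hd1]; exact_mod_cast R5.symm
      have ev : ((2*j+d+1).choose j : ℚ)
          = ((2*j+d+2).choose (j+1) : ℚ) * ((j:ℚ)+1)/(2*(j:ℚ)+d+2) := by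
        have R6q : (2*(j:ℚ)+d+2) * ((2*j+d+1).choose j : ℚ)
            = ((2*j+d+2).choose (j+1) : ℚ) * ((j:ℚ)+1) := by exact_mod_cast R6
        rw [eq_div_iff hn3]; linear_combination R6q
      simp only [gB, Bq, apTerm_cast,
        show j+d+2+(j+1) = 2*j+d+3 from by ring,
        show j+d+1+(j+1) = 2*j+d+2 from by ring,
        show j+d+(j+1) = 2*j+d+1 from by ring,
        show j+d+1+j = 2*j+d+1 from by ring]
      push_cast
      rw [eX, eZ, eY, eW, eu, ev]
      field_simp
      ring
    · -- k = m+2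
      have hj' : j = m + 1 := by omega
      subst hj'
      have z1 : (m+1).choose (m+2) = 0 := Nat.choose_eq_zero_of_lt (by omega)
      have z2 : m.choose (m+2) = 0 := Nat.choose_eq_zero_of_lt (by omega)
      have hA : (2*m+4) * (2*m+3).choose (m+1) = (2*m+4).choose (m+2) * (m+2) := by
        simpa using Nat.add_one_mul_choose_eq (2*m+3) (m+1)
      have hB : (2*m+3) * (2*m+2).choose (m+1) = (2*m+3).choose (m+2) * (m+2) := by
        simpa using Nat.add_one_mul_choose_eq (2*m+2) (m+1)
      have hS : (2*m+3).choose (m+2) = (2*m+3).choose (m+1) := by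
        simpa [show 2*m+3-(m+1) = m+2 from by omega] using
          Nat.choose_symm (show m+1 ≤ 2*m+3 from by omega)
      have hAq : (2*(m:ℚ)+4) * ((2*m+3).choose (m+1) : ℚ)
          = ((2*m+4).choose (m+2) : ℚ) * ((m:ℚ)+2) := by exact_mod_cast hA
      have hBq : (2*(m:ℚ)+3) * ((2*m+2).choose (m+1) : ℚ)
          = ((2*m+3).choose (m+1) : ℚ) * ((m:ℚ)+2) := by
        rw [← hS]; exact_mod_cast hB
      have hQ : ((m:ℚ)+2) * ((2*m+4).choose (m+2) : ℚ)
          = 2 * (2*(m:ℚ)+3) * ((2*m+2).choose (m+1) : ℚ) := by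
        have h2 : ((m:ℚ)+2) ≠ 0 := by positivity
        apply mul_left_cancel₀ h2
        linear_combination (-((m:ℚ)+2)) * hAq - 2*((m:ℚ)+2) * hBq
      simp only [gB, Bq, apTerm_cast, z1, z2, Nat.choose_self,
        show m+1+1 = m+2 from rfl,
        show m+2+(m+2) = 2*m+4 from by ring,
        show m+1+(m+2) = 2*m+3 from by ring,
        show m+1+(m+1) = 2*m+2 from by ring]
      push_cast
      linear_combination (((m:ℚ)+2)^2 * ((2*m+4).choose (m+2) : ℚ)
        + 2*((m:ℚ)+2)*(2*(m:ℚ)+3) * ((2*m+2).choose (m+1) : ℚ)) * hQ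

lemma apery_rec (m : ℕ) :
    ((m:ℚ)+2)^3 * (apSum (m+2) : ℚ)
      - (34*((m:ℚ)+1)^3+51*((m:ℚ)+1)^2+27*((m:ℚ)+1)+5) * (apSum (m+1) : ℚ)
      + ((m:ℚ)+1)^3 * (apSum m : ℚ) = 0 := by
  have z1 : (m+1).choose (m+2) = 0 := Nat.choose_eq_zero_of_lt (by omega)
  have z2 : m.choose (m+1) = 0 := Nat.choose_eq_zero_of_lt (by omega)
  have z3 : m.choose (m+2) = 0 := Nat.choose_eq_zero_of_lt (by omega)
  have h0 : (apSum (m+2) : ℚ) = ∑ k ∈ Finset.range (m+3), (apTerm (m+2) k : ℚ) := by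
    simp [apSum, Nat.cast_sum]
  have h1 : (apSum (m+1) : ℚ) = ∑ k ∈ Finset.range (m+3), (apTerm (m+1) k : ℚ) := by
    rw [Finset.sum_range_succ]
    simp [apSum, Nat.cast_sum, apTerm, z1]
  have h2 : (apSum m : ℚ) = ∑ k ∈ Finset.range (m+3), (apTerm m k : ℚ) := by
    rw [Finset.sum_range_succ, Finset.sum_range_succ]
    simp [apSum, Nat.cast_sum, apTerm, z2, z3]
  calc ((m:ℚ)+2)^3 * (apSum (m+2) : ℚ)
      - (34*((m:ℚ)+1)^3+51*((m:ℚ)+1)^2+27*((m:ℚ)+1)+5) * (apSum (m+1) : ℚ)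
      + ((m:ℚ)+1)^3 * (apSum m : ℚ)
      = ∑ k ∈ Finset.range (m+3), (((m:ℚ)+2)^3 * (apTerm (m+2) k : ℚ)
          - (34*((m:ℚ)+1)^3+51*((m:ℚ)+1)^2+27*((m:ℚ)+1)+5) * (apTerm (m+1) k : ℚ)
          + ((m:ℚ)+1)^3 * (apTerm m k : ℚ)) := by
        rw [h0, h1, h2, Finset.mul_sum, Finset.mul_sum, Finset.mul_sum,
          ← Finset.sum_sub_distrib, ← Finset.sum_add_distrib]
    _ = ∑ k ∈ Finset.range (m+3), (gB (m+1) (k+1) - gB (m+1) k) :=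
        Finset.sum_congr rfl (fun k hk => key m k (by
          have := Finset.mem_range.mp hk; omega))
    _ = gB (m+1) (m+3) - gB (m+1) 0 := Finset.sum_range_sub (gB (m+1)) (m+3)
    _ = 0 := by simp [gB, Bq, apTerm, z1]

lemma apSum_pos (n : ℕ) : 0 < apSum n := by
  have h0 : apTerm n 0 = 1 := by simp [apTerm]
  have : apTerm n 0 ≤ apSum n :=
    Finset.single_le_sum (f := fun k => apTerm n k) (fun _ _ => Nat.zero_le _)
      (Finset.mem_range.mpr (Nat.succ_pos n))
  omega

/-- If `a_n` solves Apery's recurrence with `a_0 = 1, a_1 = 5`, then every `a_n` is a positive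
integer. -/
theorem apery_a_integral (a : ℕ → ℚ)
    (ha : ∀ n : ℕ, 2 ≤ n →
      (n : ℚ)^3 * a n - (34 * (n : ℚ)^3 - 51 * (n : ℚ)^2 + 27 * (n : ℚ) - 5) * a (n - 1)
        + ((n : ℚ) - 1)^3 * a (n - 2) = 0)
    (ha0 : a 0 = 1) (ha1 : a 1 = 5) :
    ∀ n : ℕ, ∃ m : ℕ, 0 < m ∧ a n = m := by
  have main : ∀ n : ℕ, a n = (apSum n : ℚ) := by
    intro n
    induction n using Nat.strong_induction_on with
    | _ n ih =>
      rcases n with _ | _ | m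
      · simpa [apSum, apTerm] using ha0
      · rw [ha1]; norm_num [apSum, apTerm, Finset.sum_range_succ]
      · have h := ha (m+2) (by omega)
        have e1 := ih (m+1) (by omega)
        have e2 := ih m (by omega)
        simp only [show m+2-1 = m+1 from rfl, show m+2-2 = m from rfl] at h
        rw [e1, e2] at h
        push_cast at h
        have hb := apery_rec m
        have hne : ((m:ℚ)+2)^3 ≠ 0 := by positivity
        have : ((m:ℚ)+2)^3 * a (m+2) = ((m:ℚ)+2)^3 * (apSum (m+2) : ℚ) := by
          linear_combination h - hb
        exact mul_left_cancel₀ hne this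
  intro n
  exact ⟨apSum n, apSum_pos n, main n⟩
end

section
/- Let a_n be the solution of Apery's recurrence n^3 u_n - (34n^3-51n^2+27n-5) u_{n-1} + (n-1)^3 u_{n-2} = 0 with a_0 = 1, a_1 = 5, and let α = 17 + 12√2 be the larger root of x^2 - 34x + 1. Then there is a constant C > 0 such that a_n ≤ C α^n for all n. -/
set_option maxHeartbeats 1000000 in
/-- If `a_n` solves Apery's recurrence with `a_0 = 1, a_1 = 5`, and `α = 17 + 12√2` is the larger
root of `x² - 34x + 1`, then `a_n = O(α^n)`: there is `C > 0` with `a_n ≤ C α^n` for all `n`. -/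
theorem apery_a_growth (a : ℕ → ℝ)
    (ha : ∀ n : ℕ, 2 ≤ n →
      (n : ℝ)^3 * a n - (34 * (n : ℝ)^3 - 51 * (n : ℝ)^2 + 27 * (n : ℝ) - 5) * a (n - 1)
        + ((n : ℝ) - 1)^3 * a (n - 2) = 0)
    (ha0 : a 0 = 1) (ha1 : a 1 = 5) :
    ∃ C : ℝ, 0 < C ∧ ∀ n : ℕ, a n ≤ C * (17 + 12 * Real.sqrt 2)^n := by
  have hs0 : (0:ℝ) ≤ Real.sqrt 2 := Real.sqrt_nonneg 2
  have hs2 : Real.sqrt 2 ^ 2 = 2 := Real.sq_sqrt (by norm_num)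
  set s := Real.sqrt 2 with hsdef
  set α : ℝ := 17 + 12 * s with hαdef
  set β : ℝ := 17 - 12 * s with hβdef
  have hs1 : (1:ℝ) ≤ s := by nlinarith
  have hα1 : (1:ℝ) < α := by rw [hαdef]; nlinarith
  have hβ0 : (0:ℝ) < β := by rw [hβdef]; nlinarith
  have hβ1 : β ≤ 1 := by rw [hβdef]; nlinarith
  have hαβ : α * β = 1 := by rw [hαdef, hβdef]; nlinarith
  have hab : α = 34 - β := by rw [hαdef, hβdef]; ring
  have key : ∀ n : ℕ, 0 < a n ∧ a n ≤ a (n+1) ∧ a (n+1) ≤ α * a n := by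
    intro n
    induction n with
    | zero =>
      refine ⟨by rw [ha0]; norm_num, by rw [ha0, ha1]; norm_num, ?_⟩
      rw [ha0, ha1, hαdef]; nlinarith
    | succ n ih =>
      obtain ⟨h0, h1, h2⟩ := ih
      have h0' : 0 < a (n+1) := lt_of_lt_of_le h0 h1
      have hrec := ha (n+2) (by omega)
      have e1 : n + 2 - 1 = n + 1 := rfl
      have e2 : n + 2 - 2 = n := rfl
      rw [e1, e2] at hrec
      push_cast at hrec
      set m : ℝ := (n:ℝ) + 2 with hm
      have hn0 : (0:ℝ) ≤ (n:ℝ) := Nat.cast_nonneg n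
      have hm2 : (2:ℝ) ≤ m := by rw [hm]; linarith
      have hm3 : (0:ℝ) < m^3 := by positivity
      have hmm : (0:ℝ) ≤ (m-1)^3 := by nlinarith
      -- a n ≥ β * a (n+1)
      have h2' : β * a (n+1) ≤ a n := by nlinarith
      have hy1 : (m-1)^3 * (a (n+1) - a n) ≥ 0 := mul_nonneg hmm (by linarith)
      have hy2 : (32*m^3 - 48*m^2 + 24*m - 4) * a (n+1) ≥ 0 := by
        apply mul_nonneg _ h0'.le; nlinarith
      have hmono : a (n+1) ≤ a (n+2) := by
        have h : m^3 * a (n+1) ≤ m^3 * a (n+2) := by linarith [hrec, hy1, hy2]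
        exact le_of_mul_le_mul_left h hm3
      have hx1 : (m-1)^3 * (a n - β * a (n+1)) ≥ 0 := mul_nonneg hmm (by linarith)
      have hq : (0:ℝ) ≤ 3*m^2 - 3*m + 1 := by nlinarith
      have hx2 : (51*m^2 - 27*m + 5 - β*(3*m^2 - 3*m + 1)) * a (n+1) ≥ 0 := by
        apply mul_nonneg _ h0'.le
        nlinarith [mul_nonneg (by linarith : (0:ℝ) ≤ 1 - β) hq]
      have hup : a (n+2) ≤ (34 - β) * a (n+1) := by
        have h : m^3 * a (n+2) ≤ m^3 * ((34 - β) * a (n+1)) := by linarith [hrec, hx1, hx2]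
        exact le_of_mul_le_mul_left h hm3
      exact ⟨h0', hmono, by rw [hab]; exact hup⟩
  have hbound : ∀ n : ℕ, a n ≤ α ^ n := by
    intro n
    induction n with
    | zero => rw [ha0, pow_zero]
    | succ n ih =>
      calc a (n+1) ≤ α * a n := (key n).2.2
        _ ≤ α * α ^ n := by
            apply mul_le_mul_of_nonneg_left ih (by linarith)
        _ = α ^ (n+1) := by ring
  exact ⟨1, one_pos, fun n => by simpa using hbound n⟩
end

section
/- Let f, g : ℕ → ℝ with g(n) > 0 for all n, suppose the power series Σ g(n) t^n has radius of convergence r ∈ (0, ∞), and suppose lim_{n→∞} f(n)/g(n) = x ∈ ℝ. If for some x' ∈ ℝ the power series Σ (f(n) - x' g(n)) t^n has radius of convergence strictly greater than r, and Σ g(n) t^n diverges at t = r, then x' = x. -/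
open Filter

/-- If `Σ g(n) tⁿ` has radius of convergence exactly `r ∈ (0,∞)` (it converges for `|t| < r` and
diverges at `t = r`), `g > 0`, `f(n)/g(n) → x`, and for some `x'` the series
`Σ (f(n) - x' g(n)) tⁿ` has radius of convergence strictly greater than `r`, then `x' = x`. -/
theorem apery_limit_principle (f g : ℕ → ℝ) (r x x' : ℝ)
    (hg : ∀ n, 0 < g n) (hr : 0 < r)
    (hconv : ∀ t : ℝ, |t| < r → Summable (fun n : ℕ => g n * t^n))
    (hdiv : ¬ Summable (fun n : ℕ => g n * r^n))
    (hlim : Tendsto (fun n => f n / g n) atTop (nhds x))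
    (hext : ∃ r' : ℝ, r < r' ∧ ∀ t : ℝ, |t| < r' →
      Summable (fun n : ℕ => (f n - x' * g n) * t^n)) :
    x' = x := by
  by_contra hne
  obtain ⟨r', hrr', hsum⟩ := hext
  have hS : Summable (fun n : ℕ => (f n - x' * g n) * r^n) :=
    hsum r (by rw [abs_of_pos hr]; exact hrr')
  set ε := |x - x'| / 2 with hε
  have hεpos : 0 < ε := by
    have : x - x' ≠ 0 := sub_ne_zero.mpr (fun h => hne h.symm)
    positivity
  have hev : ∀ᶠ n in atTop, |f n / g n - x| < ε :=
    hlim (Metric.ball_mem_nhds x hεpos)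
  have hineq : ∀ᶠ n in atTop, ε * g n ≤ |f n - x' * g n| := by
    filter_upwards [hev] with n hn
    have hgn := hg n
    have h1 : f n - x' * g n = (f n / g n - x') * g n := by
      field_simp
    rw [h1, abs_mul, abs_of_pos hgn]
    have h2 : ε ≤ |f n / g n - x'| := by
      have h3 : |x - x'| ≤ |f n / g n - x| + |f n / g n - x'| := by
        have := abs_sub_abs_le_abs_sub (f n / g n - x') (f n / g n - x)
        have h4 : x - x' = (x - f n / g n) + (f n / g n - x') := by ring
        rw [h4]
        refine (abs_add_le _ _).trans ?_
        rw [abs_sub_comm]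
      nlinarith [abs_nonneg (f n / g n - x)]
    exact mul_le_mul_of_nonneg_right h2 hgn.le
  apply hdiv
  have hO : (fun n : ℕ => g n * r^n) =O[atTop] (fun n : ℕ => (f n - x' * g n) * r^n) := by
    rw [Asymptotics.isBigO_iff]
    refine ⟨ε⁻¹, ?_⟩
    filter_upwards [hineq] with n hn
    have hrn : (0:ℝ) < r^n := pow_pos hr n
    have hgn := hg n
    rw [Real.norm_eq_abs, Real.norm_eq_abs, abs_mul, abs_mul,
      abs_of_pos hgn, abs_of_pos hrn]
    rw [← mul_assoc]
    have : g n ≤ ε⁻¹ * |f n - x' * g n| := by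
      rw [le_inv_mul_iff₀ hεpos]
      exact hn
    exact mul_le_mul_of_nonneg_right this hrn.le
  exact summable_of_isBigO_nat hS hO
end
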